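/- Let V be a finite lattice of partitions closed under meet, with maximal element 1, and ρ: V → ℝ≥0 with total rate ρ_tot = ∑_{C ∈ V} ρ(C). Define χ(A) = ρ_tot - ∑_{C ≽ A} ρ(C) and, for A ≼ B, Q(A,B) = -∑_{C ∈ [A,B]} μ(A,C)χ(C). Then Q(A,B) = -ρ_tot·δ(A,B) + ∑_{C ≽ A} ρ(C)·δ(A, B∧C), where ∧ is the lattice meet. In particular all off-diagonal entries of Q are nonnegative and Q(A,A) = -χ(A). -/
import Mathlib


open scoped Classical

variable {V : Type*} [Fintype V] [Lattice V] [OrderTop V]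

/-- The decay rate `χ(A) = ρ_tot - ∑_{C ≽ A} ρ(C)` of the linear reference system. -/
noncomputable def chiOf (ρ : V → ℝ) (A : V) : ℝ :=
  (∑ C : V, ρ C) - ∑ C : V, if A ≤ C then ρ C else 0

/-- The matrix `Q(A,B) = -∑_{C ∈ [A,B]} μ(A,C) χ(C)`. -/
noncomputable def QmatOf (μ : V → V → ℝ) (ρ : V → ℝ) (A B : V) : ℝ :=
  -∑ C : V, if A ≤ C ∧ C ≤ B then μ A C * chiOf ρ C else 0

set_option linter.unusedSectionVars false
set_option linter.unusedVariables false

theorem mobius_delta (μ : V → V → ℝ)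
    (hdiag : ∀ A : V, μ A A = 1)
    (hrec : ∀ A B : V, A < B → μ A B = -∑ C : V, if A ≤ C ∧ C < B then μ A C else 0) :
    ∀ E A : V, A ≤ E →
      (∑ C : V, if A ≤ C ∧ C ≤ E then μ A C else 0) = if A = E then 1 else 0 := by
  intro E
  induction E using WellFoundedLT.induction with
  | _ E ih =>
    intro A hAE
    rcases eq_or_lt_of_le hAE with rfl | hlt
    · rw [if_pos rfl]
      rw [Finset.sum_eq_single A]
      · simp [hdiag]
      · intro C _ hC
        rw [if_neg]
        rintro ⟨h1, h2⟩
        exact hC (le_antisymm h2 h1)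
      · simp
    · rw [if_neg (ne_of_lt hlt)]
      have split : ∀ C : V, (if A ≤ C ∧ C ≤ E then μ A C else 0)
          = (if A ≤ C ∧ C < E then μ A C else 0) + (if C = E then μ A C else 0) := by
        intro C
        by_cases hC : C = E
        · subst hC
          simp [hAE, lt_irrefl]
        · simp only [if_neg hC, add_zero]
          congr 1
          simp only [eq_iff_iff, and_congr_right_iff]
          intro _
          exact ⟨fun h => lt_of_le_of_ne h hC, le_of_lt⟩
      rw [Finset.sum_congr rfl (fun C _ => split C), Finset.sum_add_distrib]
      have : (∑ C : V, if C = E then μ A C else 0) = μ A E := by simp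
      rw [this, hrec A E hlt]
      ring

/-- For a finite meet-closed lattice `V` with maximal element, Möbius function `μ`,
nonnegative rates `ρ` with total rate `ρ_tot`, and `χ(A) = ρ_tot - ∑_{C ≽ A} ρ(C)`:
for `A ≼ B` one has
`Q(A,B) = -ρ_tot δ(A,B) + ∑_{C ≽ A} ρ(C) δ(A, B ⊓ C)`;
in particular all off-diagonal entries of `Q` are nonnegative and `Q(A,A) = -χ(A)`. -/
theorem Qmat_closed_form (μ : V → V → ℝ)
    (hdiag : ∀ A : V, μ A A = 1)
    (hrec : ∀ A B : V, A < B → μ A B = -∑ C : V, if A ≤ C ∧ C < B then μ A C else 0)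
    (hnle : ∀ A B : V, ¬ A ≤ B → μ A B = 0)
    (ρ : V → ℝ) (hρ : ∀ C : V, 0 ≤ ρ C) :
    (∀ A B : V, A ≤ B →
      QmatOf μ ρ A B = -(∑ C : V, ρ C) * (if A = B then 1 else 0)
        + ∑ C : V, if A ≤ C then ρ C * (if B ⊓ C = A then 1 else 0) else 0) ∧
    (∀ A B : V, A ≤ B → A ≠ B → 0 ≤ QmatOf μ ρ A B) ∧
    (∀ A : V, QmatOf μ ρ A A = -chiOf ρ A) := by
  have key := mobius_delta μ hdiag hrec
  have hmain : ∀ A B : V, A ≤ B →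
      QmatOf μ ρ A B = -(∑ C : V, ρ C) * (if A = B then 1 else 0)
        + ∑ C : V, if A ≤ C then ρ C * (if B ⊓ C = A then 1 else 0) else 0 := by
    intro A B hAB
    unfold QmatOf chiOf
    have step1 : ∀ C : V,
        (if A ≤ C ∧ C ≤ B then μ A C * ((∑ D : V, ρ D) - ∑ D : V, if C ≤ D then ρ D else 0) else 0)
        = (if A ≤ C ∧ C ≤ B then μ A C else 0) * (∑ D : V, ρ D)
          - ∑ D : V, if A ≤ C ∧ C ≤ B ∧ C ≤ D then μ A C * ρ D else 0 := by
      intro C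
      by_cases h : A ≤ C ∧ C ≤ B
      · obtain ⟨h1, h2⟩ := h
        rw [if_pos ⟨h1, h2⟩, if_pos ⟨h1, h2⟩, mul_sub]
        congr 1
        rw [Finset.mul_sum]
        apply Finset.sum_congr rfl
        intro D _
        by_cases hD : C ≤ D
        · rw [if_pos hD, if_pos ⟨h1, h2, hD⟩]
        · rw [if_neg hD, mul_zero, if_neg (by tauto)]
      · rw [if_neg h, if_neg h, zero_mul, zero_sub]
        rw [show (0:ℝ) = -0 by ring]
        congr 1
        symm
        apply Finset.sum_eq_zero
        intro D _
        rw [if_neg (by tauto)]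
        ring
    rw [Finset.sum_congr rfl (fun C _ => step1 C), Finset.sum_sub_distrib,
      ← Finset.sum_mul, key B A hAB, Finset.sum_comm]
    have inner : ∀ D : V,
        (∑ C : V, if A ≤ C ∧ C ≤ B ∧ C ≤ D then μ A C * ρ D else 0)
        = if A ≤ D then ρ D * (if B ⊓ D = A then 1 else 0) else 0 := by
      intro D
      by_cases hAD : A ≤ D
      · have heq : ∀ C : V, (if A ≤ C ∧ C ≤ B ∧ C ≤ D then μ A C * ρ D else 0)
            = (if A ≤ C ∧ C ≤ B ⊓ D then μ A C else 0) * ρ D := by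
          intro C
          by_cases h : A ≤ C ∧ C ≤ B ∧ C ≤ D
          · rw [if_pos h, if_pos ⟨h.1, le_inf h.2.1 h.2.2⟩]
          · rw [if_neg h, if_neg, zero_mul]
            rintro ⟨h1, h2⟩
            exact h ⟨h1, le_trans h2 inf_le_left, le_trans h2 inf_le_right⟩
        rw [Finset.sum_congr rfl (fun C _ => heq C), ← Finset.sum_mul,
          key (B ⊓ D) A (le_inf hAB hAD), if_pos hAD]
        rw [show (B ⊓ D = A) ↔ (A = B ⊓ D) from eq_comm]
        ring
      · rw [if_neg hAD]
        apply Finset.sum_eq_zero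
        intro C _
        rw [if_neg]
        rintro ⟨h1, _, h3⟩
        exact hAD (le_trans h1 h3)
    rw [Finset.sum_congr rfl (fun D _ => inner D)]
    ring
  refine ⟨hmain, ?_, ?_⟩
  · intro A B hAB hne
    rw [hmain A B hAB, if_neg hne]
    simp only [mul_zero, neg_zero, zero_add]
    apply Finset.sum_nonneg
    intro C _
    by_cases h : A ≤ C
    · rw [if_pos h]
      apply mul_nonneg (hρ C)
      split <;> norm_num
    · rw [if_neg h]
  · intro A
    rw [hmain A A le_rfl, if_pos rfl]
    unfold chiOf
    have : ∀ C : V, (if A ≤ C then ρ C * (if A ⊓ C = A then 1 else 0) else 0)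
        = if A ≤ C then ρ C else 0 := by
      intro C
      by_cases h : A ≤ C
      · rw [if_pos h, if_pos h, if_pos (inf_eq_left.mpr h), mul_one]
      · rw [if_neg h, if_neg h]
    rw [Finset.sum_congr rfl (fun C _ => this C)]
    ring
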